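/- arXiv:1312.5862 — 3 statements merged into one kernel-verified Lean document; each statement's English description precedes it below -/
import Mathlib

section
/- Almost surely, sup_{|x| ≤ 1/2} |M_n(x)| = o(n^β) as n → ∞, for every β with (1+α)/2 < β < 1, where M_n(x) = Σ_{k=1}^{n} [ h_k^{−1} K((X_k − x)/h_k) − E(h_k^{−1} K((X_k − x)/h_k)) ]. -/
/-!
For fixed `x`, `M_n(x)` is a sum of independent centred terms bounded by `O(n^α)` whose
variances are `O(k^α)`, because the density is bounded and `∫ K² < ∞`. Bernstein's exponential
bound with `λ = c n^(β-1-α)` gives `P(|M_n(x)| > n^β) ≤ 2 exp(-c' n^(2β-1-α))`, which stays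
summable after multiplying by the `n³ + 1` points of a grid of mesh `n⁻³` in `[-1/2, 1/2]`, so by
Borel–Cantelli almost surely `|M_n| ≤ n^β` on the grid eventually. As `K` is Lipschitz,
`x ↦ M_n(x)` is Lipschitz with constant `O(n^(1+2α)) = O(n³)`, so the supremum over the interval
exceeds the grid maximum by `O(1)`. Hence `sup |M_n| = O(n^β)` almost surely for each `β`, and
running over rational `β` gives `o(n^β)` for all admissible `β` at once.
-/

open MeasureTheory ProbabilityTheory Filter Set Real Asymptotics

section Bernstein

variable {Ω ι : Type*} [MeasurableSpace Ω] {μ : Measure Ω} [IsProbabilityMeasure μ]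

lemma integrable_exp_mul_of_abs_le {W : Ω → ℝ} (hW : Measurable W) {m : ℝ}
    (hb : ∀ ω, |W ω| ≤ m) (l : ℝ) : Integrable (fun ω => exp (l * W ω)) μ :=
  Integrable.of_bound (hW.const_mul l).exp.aestronglyMeasurable (exp (|l| * m))
    (ae_of_all _ fun ω => by
      rw [norm_of_nonneg (exp_pos _).le, exp_le_exp]
      calc l * W ω ≤ |l| * |W ω| := by rw [← abs_mul]; exact le_abs_self _
        _ ≤ |l| * m := mul_le_mul_of_nonneg_left (hb ω) (abs_nonneg l))

lemma mgf_le_exp_sq_mul_of_abs_le {W : Ω → ℝ} (hW : Measurable W) {m v l : ℝ}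
    (hb : ∀ ω, |W ω| ≤ m) (hcen : μ[W] = 0) (hv : μ[W ^ 2] ≤ v)
    (hl : 0 ≤ l) (hlm : l * m ≤ 1) :
    mgf W μ l ≤ exp (l ^ 2 * v) := by
  have hW1 : Integrable W μ := Integrable.of_bound hW.aestronglyMeasurable m (ae_of_all _ hb)
  have hW2 : Integrable (fun ω => W ω ^ 2) μ :=
    (MemLp.of_bound (p := 2) hW.aestronglyMeasurable m (ae_of_all _ hb)).integrable_sq
  have hpt : ∀ ω, exp (l * W ω) ≤ 1 + l * W ω + l ^ 2 * W ω ^ 2 := fun ω => by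
    have hlW : |l * W ω| ≤ 1 := by
      rw [abs_mul, abs_of_nonneg hl]
      exact (mul_le_mul_of_nonneg_left (hb ω) hl).trans hlm
    have := (abs_le.1 (abs_exp_sub_one_sub_id_le hlW)).2
    linarith [mul_pow l (W ω) 2]
  have hlin : Integrable (fun ω => 1 + l * W ω) μ := (integrable_const 1).add (hW1.const_mul l)
  have hquad : Integrable (fun ω => l ^ 2 * W ω ^ 2) μ := hW2.const_mul _
  calc mgf W μ l ≤ ∫ ω, (1 + l * W ω + l ^ 2 * W ω ^ 2) ∂μ :=
        integral_mono (integrable_exp_mul_of_abs_le hW hb l) (hlin.add hquad) hpt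
    _ = 1 + l * μ[W] + l ^ 2 * μ[W ^ 2] := by
        rw [integral_add hlin hquad, integral_add (integrable_const 1) (hW1.const_mul l),
          integral_const_mul, integral_const_mul]
        simp
    _ ≤ 1 + l ^ 2 * v := by
        rw [hcen, mul_zero, add_zero]
        gcongr
    _ ≤ exp (l ^ 2 * v) := by linarith [add_one_le_exp (l ^ 2 * v)]

theorem measureReal_sum_ge_le_of_abs_le {Z : ι → Ω → ℝ} (hind : iIndepFun Z μ)
    (hmeas : ∀ i, Measurable (Z i)) {s : Finset ι} {m : ℝ} {v : ι → ℝ}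
    (hb : ∀ i ∈ s, ∀ ω, |Z i ω| ≤ m) (hcen : ∀ i ∈ s, μ[Z i] = 0)
    (hv : ∀ i ∈ s, μ[Z i ^ 2] ≤ v i) {l : ℝ} (hl : 0 ≤ l) (hlm : l * m ≤ 1) (t : ℝ) :
    μ.real {ω | t ≤ ∑ i ∈ s, Z i ω} ≤ exp (-(l * t) + l ^ 2 * ∑ i ∈ s, v i) := by
  have hint := hind.integrable_exp_mul_sum (t := l) hmeas
    fun i hi => integrable_exp_mul_of_abs_le (hmeas i) (hb i hi) l
  have hmgf : mgf (∑ i ∈ s, Z i) μ l ≤ exp (l ^ 2 * ∑ i ∈ s, v i) := by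
    rw [hind.mgf_sum hmeas, Finset.mul_sum, exp_sum]
    exact Finset.prod_le_prod (fun _ _ => mgf_nonneg)
      fun i hi => mgf_le_exp_sq_mul_of_abs_le (hmeas i) (hb i hi) (hcen i hi) (hv i hi) hl hlm
  calc μ.real {ω | t ≤ ∑ i ∈ s, Z i ω} = μ.real {ω | t ≤ (∑ i ∈ s, Z i) ω} := by
        simp only [Finset.sum_apply]
    _ ≤ exp (-l * t) * mgf (∑ i ∈ s, Z i) μ l := measure_ge_le_exp_mul_mgf t hl hint
    _ ≤ exp (-l * t) * exp (l ^ 2 * ∑ i ∈ s, v i) := by gcongr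
    _ = exp (-(l * t) + l ^ 2 * ∑ i ∈ s, v i) := by rw [← exp_add, neg_mul]

theorem measureReal_abs_sum_gt_le_of_abs_le {Z : ι → Ω → ℝ} (hind : iIndepFun Z μ)
    (hmeas : ∀ i, Measurable (Z i)) {s : Finset ι} {m : ℝ} {v : ι → ℝ}
    (hb : ∀ i ∈ s, ∀ ω, |Z i ω| ≤ m) (hcen : ∀ i ∈ s, μ[Z i] = 0)
    (hv : ∀ i ∈ s, μ[Z i ^ 2] ≤ v i) {l : ℝ} (hl : 0 ≤ l) (hlm : l * m ≤ 1) (t : ℝ) :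
    μ.real {ω | t < |∑ i ∈ s, Z i ω|} ≤ 2 * exp (-(l * t) + l ^ 2 * ∑ i ∈ s, v i) := by
  have hupper := measureReal_sum_ge_le_of_abs_le hind hmeas hb hcen hv hl hlm t
  have hlower := measureReal_sum_ge_le_of_abs_le (Z := fun i ω => -Z i ω)
    (hind.comp (fun _ => Neg.neg) fun _ => measurable_neg) (fun i => (hmeas i).neg)
    (fun i hi ω => (abs_neg (Z i ω)).trans_le (hb i hi ω))
    (fun i hi => by rw [integral_neg, hcen i hi, neg_zero])
    (fun i hi => by simpa only [Pi.pow_apply, neg_sq] using hv i hi) hl hlm t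
  have hsub : {ω | t < |∑ i ∈ s, Z i ω|}
      ⊆ {ω | t ≤ ∑ i ∈ s, Z i ω} ∪ {ω | t ≤ ∑ i ∈ s, -Z i ω} := fun ω hω => by
    simp only [mem_ofPred_eq, Finset.sum_neg_distrib, mem_union] at hω ⊢
    rcases abs_cases (∑ i ∈ s, Z i ω) with ⟨h, _⟩ | ⟨h, _⟩
    · exact Or.inl (h ▸ hω).le
    · exact Or.inr (h ▸ hω).le
  calc μ.real {ω | t < |∑ i ∈ s, Z i ω|}
      ≤ μ.real {ω | t ≤ ∑ i ∈ s, Z i ω} + μ.real {ω | t ≤ ∑ i ∈ s, -Z i ω} :=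
        (measureReal_mono hsub).trans (measureReal_union_le _ _)
    _ ≤ 2 * exp (-(l * t) + l ^ 2 * ∑ i ∈ s, v i) := by linarith

end Bernstein

section Centering

variable {Ω : Type*} [MeasurableSpace Ω] {μ : Measure Ω} [IsProbabilityMeasure μ]

lemma abs_sub_integral_le_of_abs_le {W : Ω → ℝ} {B : ℝ} (hb : ∀ ω, |W ω| ≤ B) (ω : Ω) :
    |W ω - μ[W]| ≤ 2 * B := by
  have hmean : |μ[W]| ≤ B := by
    simpa using norm_integral_le_of_norm_le_const (μ := μ) (f := W) (ae_of_all _ hb)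
  linarith [abs_sub (W ω) μ[W], hb ω]

lemma integral_sub_integral_eq_zero {W : Ω → ℝ} (hW : Integrable W μ) :
    ∫ ω, (W ω - μ[W]) ∂μ = 0 := by
  rw [integral_sub hW (integrable_const _), integral_const]
  simp

lemma integral_sub_integral_sq_le {W : Ω → ℝ} (hW : AEMeasurable W μ) :
    ∫ ω, (W ω - μ[W]) ^ 2 ∂μ ≤ ∫ ω, W ω ^ 2 ∂μ := by
  rw [← variance_eq_integral hW]
  exact variance_le_expectation_sq hW.aestronglyMeasurable

lemma abs_sub_integral_sub_sub_integral_le {U V : Ω → ℝ} (hU : Integrable U μ)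
    (hV : Integrable V μ) {c : ℝ} (hUV : ∀ ω, |U ω - V ω| ≤ c) (ω : Ω) :
    |(U ω - μ[U]) - (V ω - μ[V])| ≤ 2 * c := by
  have hmean : |μ[U] - μ[V]| ≤ c := by
    rw [← integral_sub hU hV]
    simpa using
      norm_integral_le_of_norm_le_const (μ := μ) (f := fun ω => U ω - V ω) (ae_of_all _ hUV)
  calc |(U ω - μ[U]) - (V ω - μ[V])| = |(U ω - V ω) - (μ[U] - μ[V])| := by ring_nf
    _ ≤ |U ω - V ω| + |μ[U] - μ[V]| := abs_sub _ _
    _ ≤ 2 * c := by linarith [hUV ω]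

end Centering

lemma withDensity_ofReal_le_smul {α : Type*} [MeasurableSpace α] (ν : Measure α) {g : α → ℝ}
    {C : ℝ} (hg : ∀ x, g x ≤ C) :
    ν.withDensity (fun x => ENNReal.ofReal (g x)) ≤ ENNReal.ofReal C • ν := by
  rw [← withDensity_const]
  exact withDensity_mono (ae_of_all _ fun x => ENNReal.ofReal_le_ofReal (hg x))

noncomputable def scaledKernel (K : ℝ → ℝ) (h x y : ℝ) : ℝ := h⁻¹ * K ((y - x) / h)

section ScaledKernel

variable {K : ℝ → ℝ} {h : ℝ}

lemma abs_scaledKernel_le {C : ℝ} (hK : ∀ u, |K u| ≤ C) (hh : 0 ≤ h) (x y : ℝ) :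
    |scaledKernel K h x y| ≤ h⁻¹ * C := by
  rw [scaledKernel, abs_mul, abs_of_nonneg (inv_nonneg.2 hh)]
  exact mul_le_mul_of_nonneg_left (hK _) (inv_nonneg.2 hh)

lemma abs_scaledKernel_sub_le {L : NNReal} (hK : LipschitzWith L K) (y x x' : ℝ) :
    |scaledKernel K h x y - scaledKernel K h x' y| ≤ L * h⁻¹ ^ 2 * |x - x'| := by
  have hdiff : (y - x) / h - (y - x') / h = -(x - x') * h⁻¹ := by ring
  calc |scaledKernel K h x y - scaledKernel K h x' y|
      = |h⁻¹| * |K ((y - x) / h) - K ((y - x') / h)| := by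
        rw [scaledKernel, scaledKernel, ← mul_sub, abs_mul]
    _ ≤ |h⁻¹| * (L * (|x - x'| * |h⁻¹|)) := by
        gcongr
        simpa only [Real.dist_eq, hdiff, abs_mul, abs_neg]
          using hK.dist_le_mul ((y - x) / h) ((y - x') / h)
    _ = L * h⁻¹ ^ 2 * |x - x'| := by rw [← sq_abs h⁻¹]; ring

lemma measurable_scaledKernel (hK : Measurable K) (x : ℝ) : Measurable (scaledKernel K h x) :=
  measurable_const.mul (hK.comp ((measurable_id.sub_const x).div_const h))

lemma integral_scaledKernel_sq (hh : 0 < h) (x : ℝ) :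
    ∫ y, scaledKernel K h x y ^ 2 = (∫ u, K u ^ 2) * h⁻¹ := by
  simp_rw [scaledKernel, mul_pow]
  rw [integral_const_mul, integral_sub_right_eq_self (fun y => K (y / h) ^ 2) x,
    Measure.integral_comp_div (fun u => K u ^ 2), smul_eq_mul, abs_of_pos hh]
  field_simp

lemma integral_scaledKernel_comp_sq_le {Ω : Type*} [MeasurableSpace Ω] {μ : Measure Ω}
    {Y : Ω → ℝ} (hY : Measurable Y) {C : ℝ} (hC : 0 ≤ C)
    (hmap : μ.map Y ≤ ENNReal.ofReal C • volume) (hKm : Measurable K)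
    (hK : Integrable fun u => K u ^ 2) (hh : 0 < h) (x : ℝ) :
    ∫ ω, scaledKernel K h x (Y ω) ^ 2 ∂μ ≤ C * (∫ u, K u ^ 2) * h⁻¹ := by
  have hint : Integrable (fun y => scaledKernel K h x y ^ 2) := by
    simp_rw [scaledKernel, mul_pow]
    exact ((hK.comp_div hh.ne').comp_sub_right x).const_mul _
  rw [← integral_map hY.aemeasurable
    ((measurable_scaledKernel hKm x).pow_const 2).aestronglyMeasurable]
  calc ∫ y, scaledKernel K h x y ^ 2 ∂μ.map Y
      ≤ ∫ y, scaledKernel K h x y ^ 2 ∂(ENNReal.ofReal C • volume) :=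
        integral_mono_measure hmap (ae_of_all _ fun y => sq_nonneg _)
          (hint.smul_measure ENNReal.ofReal_ne_top)
    _ = C * (∫ u, K u ^ 2) * h⁻¹ := by
        rw [integral_smul_measure, ENNReal.toReal_ofReal hC, smul_eq_mul,
          integral_scaledKernel_sq hh, mul_assoc]

lemma integrable_scaledKernel_comp {Ω : Type*} [MeasurableSpace Ω] {μ : Measure Ω}
    [IsFiniteMeasure μ] {C : ℝ} {Y : Ω → ℝ} (hY : Measurable Y)
    (hKm : Measurable K) (hK : ∀ u, |K u| ≤ C) (hh : 0 ≤ h) (x : ℝ) :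
    Integrable (fun ω => scaledKernel K h x (Y ω)) μ :=
  Integrable.of_bound ((measurable_scaledKernel hKm x).comp hY).aestronglyMeasurable _
    (ae_of_all _ fun ω => abs_scaledKernel_le hK hh x (Y ω))

end ScaledKernel

lemma iSup_Icc_abs_le_of_grid {f : ℝ → ℝ} {a b L A δ : ℝ} {N : ℕ} (hδ : 0 < δ)
    (hN : b - a ≤ N * δ) (hlip : ∀ x y, |f x - f y| ≤ L * |x - y|)
    (hgrid : ∀ j ≤ N, |f (a + j * δ)| ≤ A) :
    ⨆ x ∈ Icc a b, |f x| ≤ A + L * δ := by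
  have hL : 0 ≤ L := by simpa using (abs_nonneg _).trans (hlip 1 0)
  have hA : 0 ≤ A := (abs_nonneg _).trans (hgrid 0 N.zero_le)
  refine Real.iSup_le (fun x => Real.iSup_le (fun hx => ?_) (by positivity)) (by positivity)
  set j := ⌊(x - a) / δ⌋₊
  have hj : (j : ℝ) * δ ≤ x - a :=
    (le_div_iff₀ hδ).1 (Nat.floor_le (div_nonneg (sub_nonneg.2 hx.1) hδ.le))
  have hj' : x - a < (j + 1) * δ := (div_lt_iff₀ hδ).1 (Nat.lt_floor_add_one _)
  have hjN : j ≤ N := Nat.floor_le_of_le ((div_le_iff₀ hδ).2 (by linarith [hx.2]))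
  have hclose : |x - (a + j * δ)| ≤ δ := by
    rw [abs_le]; constructor <;> nlinarith
  calc |f x| ≤ |f (a + j * δ)| + |f x - f (a + j * δ)| := by
        linarith [abs_sub_abs_le_abs_sub (f x) (f (a + j * δ))]
    _ ≤ A + L * δ := add_le_add (hgrid j hjN) ((hlip _ _).trans (by gcongr))

lemma summable_rpow_mul_exp_neg_mul_rpow (p : ℝ) {c γ : ℝ} (hc : 0 < c) (hγ : 0 < γ) :
    Summable fun n : ℕ => (n : ℝ) ^ p * exp (-c * (n : ℝ) ^ γ) := by
  have hpow : Tendsto (fun n : ℕ => (n : ℝ) ^ γ) atTop atTop :=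
    (tendsto_rpow_atTop hγ).comp tendsto_natCast_atTop_atTop
  -- `exp (-c y) = o(y ^ s)` at `y = n ^ γ`, with `s = (-p - 2) / γ`
  have hexp : (fun n : ℕ => exp (-c * (n : ℝ) ^ γ)) =o[atTop] fun n => (n : ℝ) ^ (-p - 2) := by
    refine ((isLittleO_exp_neg_mul_rpow_atTop hc ((-p - 2) / γ)).comp_tendsto hpow).congr_right
      fun n => ?_
    simp only [Function.comp_apply]
    rw [← rpow_mul (Nat.cast_nonneg n), mul_div_cancel₀ _ hγ.ne']
  refine summable_of_isBigO_nat (summable_nat_rpow.2 (by norm_num : (-2 : ℝ) < -1)) ?_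
  refine ((isBigO_refl (fun n : ℕ => (n : ℝ) ^ p) atTop).mul hexp.isBigO).congr' .rfl ?_
  filter_upwards [eventually_gt_atTop 0] with n hn
  rw [← rpow_add (Nat.cast_pos.2 hn)]
  ring_nf

lemma isLittleO_natCast_rpow_rpow {p q : ℝ} (hpq : p < q) :
    (fun n : ℕ => (n : ℝ) ^ p) =o[atTop] fun n => (n : ℝ) ^ q := by
  refine (isLittleO_iff_tendsto' ?_).2 ?_
  · filter_upwards [eventually_gt_atTop 0] with n hn h
    exact absurd h (rpow_pos_of_pos (Nat.cast_pos.2 hn) q).ne'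
  · refine ((tendsto_rpow_neg_atTop (sub_pos.2 hpq)).comp tendsto_natCast_atTop_atTop).congr' ?_
    filter_upwards [eventually_gt_atTop 0] with n hn
    simp only [Function.comp_apply, neg_sub]
    rw [rpow_sub (Nat.cast_pos.2 hn)]

lemma sum_Icc_rpow_le {α : ℝ} (hα : 0 ≤ α) (n : ℕ) :
    ∑ k ∈ Finset.Icc 1 n, (k : ℝ) ^ α ≤ (n : ℝ) ^ (1 + α) := by
  calc ∑ k ∈ Finset.Icc 1 n, (k : ℝ) ^ α ≤ ∑ _k ∈ Finset.Icc 1 n, (n : ℝ) ^ α :=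
        Finset.sum_le_sum fun k hk => rpow_le_rpow (Nat.cast_nonneg k)
          (Nat.cast_le.2 (Finset.mem_Icc.1 hk).2) hα
    _ = (n : ℝ) ^ (1 + α) := by
        rw [Finset.sum_const, Nat.card_Icc, nsmul_eq_mul,
          rpow_add' (Nat.cast_nonneg n) (by linarith : (0 : ℝ) < 1 + α).ne', rpow_one]
        simp

-- With `λ = c N^(β-1-α)`, both `λ N^β` and `λ² N^(1+α)` are multiples of `N^(2β-1-α)`.
lemma bernstein_exponent_le {N α β c D : ℝ} (hN : 0 < N) (hc : 0 ≤ c) (hcD : c * (2 * D) ≤ 1) :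
    -(c * N ^ (β - 1 - α) * N ^ β) + (c * N ^ (β - 1 - α)) ^ 2 * (D * N ^ (1 + α))
      ≤ -(c / 2) * N ^ (2 * β - 1 - α) := by
  have h1 : N ^ (β - 1 - α) * N ^ (1 + α) = N ^ β := by rw [← rpow_add hN]; ring_nf
  have h2 : N ^ (β - 1 - α) * N ^ β = N ^ (2 * β - 1 - α) := by rw [← rpow_add hN]; ring_nf
  have hpos : 0 ≤ N ^ (2 * β - 1 - α) := by positivity
  calc -(c * N ^ (β - 1 - α) * N ^ β) + (c * N ^ (β - 1 - α)) ^ 2 * (D * N ^ (1 + α))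
      = -c * N ^ (2 * β - 1 - α) + c * (c * (2 * D)) / 2 * N ^ (2 * β - 1 - α) := by
        rw [← h2, ← h1]; ring
    _ ≤ -(c / 2) * N ^ (2 * β - 1 - α) := by
        nlinarith [mul_le_mul_of_nonneg_left hcD hc]

lemma isBigO_of_le_add_const {f g : ℕ → ℝ} {B : ℝ} (hf : ∀ n, 0 ≤ f n)
    (hg : ∀ᶠ n in atTop, 1 ≤ g n) (hfg : ∀ᶠ n in atTop, f n ≤ g n + B) : f =O[atTop] g :=
  IsBigO.of_bound (1 + |B|) <| by
    filter_upwards [hg, hfg] with n hgn hfn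
    rw [norm_of_nonneg (hf n), norm_of_nonneg (by linarith)]
    nlinarith [le_abs_self B, abs_nonneg B]

noncomputable def centeredKernelSum {Ω : Type*} [MeasurableSpace Ω] (μ : Measure Ω)
    (X : ℕ → Ω → ℝ) (K : ℝ → ℝ) (h : ℕ → ℝ) (n : ℕ) (x : ℝ) (ω : Ω) : ℝ :=
  ∑ k ∈ Finset.Icc 1 n,
    (scaledKernel K (h k) x (X k ω) - ∫ ω', scaledKernel K (h k) x (X k ω') ∂μ)

section CenteredKernelSum

variable {Ω : Type*} [MeasurableSpace Ω] {μ : Measure Ω} [IsProbabilityMeasure μ]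
  {X : ℕ → Ω → ℝ} {K : ℝ → ℝ} {h : ℕ → ℝ} {α : ℝ}

lemma inv_bandwidth_eq (hh : ∀ k : ℕ, h k = (k : ℝ) ^ (-α)) (k : ℕ) :
    (h k)⁻¹ = (k : ℝ) ^ α := by
  rw [hh, rpow_neg (Nat.cast_nonneg k), inv_inv]

lemma abs_scaledKernel_bandwidth_le {C : ℝ} (hKC : ∀ u, |K u| ≤ C) (hα : 0 ≤ α)
    (hh : ∀ k : ℕ, h k = (k : ℝ) ^ (-α)) {n k : ℕ} (hk : k ∈ Finset.Icc 1 n) (x y : ℝ) :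
    |scaledKernel K (h k) x y| ≤ C * (n : ℝ) ^ α := by
  have hC : 0 ≤ C := (abs_nonneg _).trans (hKC 0)
  refine (abs_scaledKernel_le hKC (by rw [hh]; positivity) x y).trans ?_
  rw [inv_bandwidth_eq hh, mul_comm]
  exact mul_le_mul_of_nonneg_left
    (rpow_le_rpow (Nat.cast_nonneg k) (Nat.cast_le.2 (Finset.mem_Icc.1 hk).2) hα) hC

lemma abs_centeredKernelSum_sub_le (hX : ∀ k, Measurable (X k)) {L : NNReal}
    (hKL : LipschitzWith L K) {C : ℝ} (hKC : ∀ u, |K u| ≤ C) (hα : 0 ≤ α)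
    (hh : ∀ k : ℕ, h k = (k : ℝ) ^ (-α)) (n : ℕ) (x x' : ℝ) (ω : Ω) :
    |centeredKernelSum μ X K h n x ω - centeredKernelSum μ X K h n x' ω|
      ≤ 2 * L * (n : ℝ) ^ (1 + 2 * α) * |x - x'| := by
  have hterm : ∀ k ∈ Finset.Icc 1 n,
      |(scaledKernel K (h k) x (X k ω) - ∫ ω', scaledKernel K (h k) x (X k ω') ∂μ)
        - (scaledKernel K (h k) x' (X k ω) - ∫ ω', scaledKernel K (h k) x' (X k ω') ∂μ)|
        ≤ 2 * (L * (n : ℝ) ^ (2 * α) * |x - x'|) := fun k hk => by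
    have hh0 : 0 ≤ h k := by rw [hh]; positivity
    refine abs_sub_integral_sub_sub_integral_le
      (integrable_scaledKernel_comp (hX k) hKL.continuous.measurable hKC hh0 x)
      (integrable_scaledKernel_comp (hX k) hKL.continuous.measurable hKC hh0 x')
      (fun ω => (abs_scaledKernel_sub_le hKL _ x x').trans ?_) ω
    rw [inv_bandwidth_eq hh, ← rpow_two, ← rpow_mul (Nat.cast_nonneg k), mul_comm α]
    gcongr
    exact (Finset.mem_Icc.1 hk).2
  calc |centeredKernelSum μ X K h n x ω - centeredKernelSum μ X K h n x' ω|
      ≤ ∑ k ∈ Finset.Icc 1 n, 2 * (L * (n : ℝ) ^ (2 * α) * |x - x'|) := by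
        rw [centeredKernelSum, centeredKernelSum, ← Finset.sum_sub_distrib]
        exact (Finset.abs_sum_le_sum_abs _ _).trans (Finset.sum_le_sum hterm)
    _ = 2 * L * (n : ℝ) ^ (1 + 2 * α) * |x - x'| := by
        rw [Finset.sum_const, Nat.card_Icc, nsmul_eq_mul,
          rpow_add' (Nat.cast_nonneg n) (by linarith : (0 : ℝ) < 1 + 2 * α).ne', rpow_one]
        push_cast
        ring

theorem measureReal_abs_centeredKernelSum_gt_le (hX : ∀ k, Measurable (X k))
    (hind : iIndepFun X μ) {Cg : ℝ} (hCg : 0 ≤ Cg)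
    (hmap : ∀ k, μ.map (X k) ≤ ENNReal.ofReal Cg • volume) (hKm : Measurable K) {C : ℝ}
    (hKC : ∀ u, |K u| ≤ C) (hK2 : Integrable fun u => K u ^ 2) (hα : 0 ≤ α)
    (hh : ∀ k : ℕ, h k = (k : ℝ) ^ (-α)) {β : ℝ} (hβ : β < 1) :
    ∃ c > 0, ∀ n : ℕ, ∀ x, μ.real {ω | (n : ℝ) ^ β < |centeredKernelSum μ X K h n x ω|}
      ≤ 2 * exp (-c * (n : ℝ) ^ (2 * β - 1 - α)) := by
  set D := Cg * ∫ u, K u ^ 2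
  have hD : 0 ≤ D := mul_nonneg hCg (integral_nonneg fun _ => sq_nonneg _)
  have hC : 0 ≤ C := (abs_nonneg _).trans (hKC 0)
  set c := (2 * C + 2 * D + 1)⁻¹
  have hc : 0 < c := by positivity
  have hcC : c * (2 * C) ≤ 1 := by rw [inv_mul_le_iff₀ (by positivity)]; linarith
  have hcD : c * (2 * D) ≤ 1 := by rw [inv_mul_le_iff₀ (by positivity)]; linarith
  refine ⟨c / 2, by positivity, fun n x => ?_⟩
  rcases n.eq_zero_or_pos with rfl | hn
  · have hzero : ∀ ω, centeredKernelSum μ X K h 0 x ω = 0 := fun ω => by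
      simp [centeredKernelSum]
    simp only [hzero, Nat.cast_zero, abs_zero, not_lt.2 (rpow_nonneg le_rfl β), ofPred_false,
      measureReal_empty]
    positivity
  set N : ℝ := (n : ℝ)
  have hN : 1 ≤ N := Nat.one_le_cast.2 hn
  have hN0 : 0 < N := by linarith
  set W : ℕ → Ω → ℝ := fun k ω => scaledKernel K (h k) x (X k ω)
  have hWm : ∀ k, Measurable (W k) := fun k => (measurable_scaledKernel hKm x).comp (hX k)
  have hind' : iIndepFun (fun k ω => W k ω - μ[W k]) μ :=
    hind.comp (fun k y => scaledKernel K (h k) x y - ∫ ω', W k ω' ∂μ)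
      fun k => (measurable_scaledKernel hKm x).sub_const _
  have hh0 : ∀ k ∈ Finset.Icc 1 n, 0 < h k := fun k hk => by
    rw [hh]; exact rpow_pos_of_pos (Nat.cast_pos.2 (Finset.mem_Icc.1 hk).1) _
  have hW2 : ∀ k ∈ Finset.Icc 1 n, μ[W k ^ 2] ≤ D * (k : ℝ) ^ α := fun k hk => by
    rw [← inv_bandwidth_eq hh]
    exact integral_scaledKernel_comp_sq_le (hX k) hCg (hmap k) hKm hK2 (hh0 k hk) x
  set l := c * N ^ (β - 1 - α)
  have hl_m : l * (2 * (C * N ^ α)) ≤ 1 := by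
    have : N ^ (β - 1 - α) * N ^ α ≤ 1 := by
      rw [← rpow_add hN0]; exact rpow_le_one_of_one_le_of_nonpos hN (by linarith)
    calc l * (2 * (C * N ^ α)) = c * (2 * C) * (N ^ (β - 1 - α) * N ^ α) := by ring
      _ ≤ 1 * 1 := by gcongr
      _ = 1 := one_mul 1
  have hsum : ∑ k ∈ Finset.Icc 1 n, D * (k : ℝ) ^ α ≤ D * N ^ (1 + α) := by
    rw [← Finset.mul_sum]; exact mul_le_mul_of_nonneg_left (sum_Icc_rpow_le hα n) hD
  calc μ.real {ω | N ^ β < |centeredKernelSum μ X K h n x ω|}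
      ≤ 2 * exp (-(l * N ^ β) + l ^ 2 * ∑ k ∈ Finset.Icc 1 n, D * (k : ℝ) ^ α) :=
        measureReal_abs_sum_gt_le_of_abs_le hind' (fun k => (hWm k).sub_const _)
          (fun k hk ω => abs_sub_integral_le_of_abs_le
            (fun ω => abs_scaledKernel_bandwidth_le hKC hα hh hk x (X k ω)) ω)
          (fun k _ => integral_sub_integral_eq_zero
            (integrable_scaledKernel_comp (hX k) hKm hKC (by rw [hh]; positivity) x))
          (fun k hk => (integral_sub_integral_sq_le (hWm k).aemeasurable).trans (hW2 k hk))
          (by positivity) hl_m (N ^ β)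
    _ ≤ 2 * exp (-(l * N ^ β) + l ^ 2 * (D * N ^ (1 + α))) := by gcongr
    _ ≤ 2 * exp (-(c / 2) * N ^ (2 * β - 1 - α)) := by
        gcongr; exact bernstein_exponent_le hN0 hc.le hcD

theorem ae_eventually_abs_centeredKernelSum_grid_le (hX : ∀ k, Measurable (X k))
    (hind : iIndepFun X μ) {Cg : ℝ} (hCg : 0 ≤ Cg)
    (hmap : ∀ k, μ.map (X k) ≤ ENNReal.ofReal Cg • volume) (hKm : Measurable K) {C : ℝ}
    (hKC : ∀ u, |K u| ≤ C) (hK2 : Integrable fun u => K u ^ 2) (hα : 0 ≤ α)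
    (hh : ∀ k : ℕ, h k = (k : ℝ) ^ (-α)) {β : ℝ} (hβ : (1 + α) / 2 < β) (hβ1 : β < 1) :
    ∀ᵐ ω ∂μ, ∀ᶠ n : ℕ in atTop, ∀ j ≤ n ^ 3,
      |centeredKernelSum μ X K h n (-(1 / 2) + j * ((n : ℝ) ^ 3)⁻¹) ω| ≤ (n : ℝ) ^ β := by
  obtain ⟨c, hc, htail⟩ :=
    measureReal_abs_centeredKernelSum_gt_le hX hind hCg hmap hKm hKC hK2 hα hh hβ1
  set γ := 2 * β - 1 - α
  have hγ : 0 < γ := by linarith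
  set A : ℕ → Set Ω := fun n => ⋃ j ∈ Finset.range (n ^ 3 + 1),
    {ω | (n : ℝ) ^ β < |centeredKernelSum μ X K h n (-(1 / 2) + j * ((n : ℝ) ^ 3)⁻¹) ω|}
  have hA : ∀ n, μ (A n) ≤ ENNReal.ofReal (2 * ((n : ℝ) ^ 3 + 1) * exp (-c * (n : ℝ) ^ γ)) :=
    fun n => calc
      μ (A n) ≤ ∑ j ∈ Finset.range (n ^ 3 + 1), ENNReal.ofReal (2 * exp (-c * (n : ℝ) ^ γ)) :=
        (measure_biUnion_finset_le _ _).trans (Finset.sum_le_sum fun j _ => by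
          rw [← ofReal_measureReal]; exact ENNReal.ofReal_le_ofReal (htail n _))
      _ = ENNReal.ofReal (2 * ((n : ℝ) ^ 3 + 1) * exp (-c * (n : ℝ) ^ γ)) := by
        rw [Finset.sum_const, Finset.card_range, nsmul_eq_mul, ← ENNReal.ofReal_natCast,
          ← ENNReal.ofReal_mul (by positivity)]
        push_cast
        ring_nf
  have hsum : Summable fun n : ℕ => 2 * ((n : ℝ) ^ 3 + 1) * exp (-c * (n : ℝ) ^ γ) := by
    refine (((summable_rpow_mul_exp_neg_mul_rpow 3 hc hγ).add
      (summable_rpow_mul_exp_neg_mul_rpow 0 hc hγ)).mul_left 2).congr fun n => ?_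
    simp only [rpow_ofNat, rpow_zero, one_mul]
    ring
  have hfin : ∑' n, μ (A n) ≠ ⊤ := by
    refine ne_top_of_le_ne_top ?_ (ENNReal.tsum_le_tsum hA)
    rw [← ENNReal.ofReal_tsum_of_nonneg (fun n => by positivity) hsum]
    exact ENNReal.ofReal_ne_top
  filter_upwards [ae_eventually_notMem hfin] with ω hω
  filter_upwards [hω] with n hn j hj
  exact not_lt.1 fun hlt =>
    hn (mem_iUnion₂.2 ⟨j, Finset.mem_range.2 (Nat.lt_succ_of_le hj), hlt⟩)

lemma iSup_abs_centeredKernelSum_le_of_grid (hX : ∀ k, Measurable (X k)) {L : NNReal}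
    (hKL : LipschitzWith L K) {C : ℝ} (hKC : ∀ u, |K u| ≤ C) (hα : 0 ≤ α) (hα1 : α ≤ 1)
    (hh : ∀ k : ℕ, h k = (k : ℝ) ^ (-α)) {n : ℕ} (hn : 0 < n) {A : ℝ} (ω : Ω)
    (hgrid : ∀ j ≤ n ^ 3,
      |centeredKernelSum μ X K h n (-(1 / 2) + j * ((n : ℝ) ^ 3)⁻¹) ω| ≤ A) :
    ⨆ x ∈ Icc (-(1 / 2) : ℝ) (1 / 2), |centeredKernelSum μ X K h n x ω| ≤ A + 2 * L := by
  have hN : (1 : ℝ) ≤ n := Nat.one_le_cast.2 hn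
  have hlip := abs_centeredKernelSum_sub_le (μ := μ) hX hKL hKC hα hh n
  have hmesh : 1 / 2 - -(1 / 2) ≤ ((n ^ 3 : ℕ) : ℝ) * ((n : ℝ) ^ 3)⁻¹ := by
    rw [Nat.cast_pow, mul_inv_cancel₀ (by positivity)]; norm_num
  refine (iSup_Icc_abs_le_of_grid (by positivity) hmesh (fun x y => hlip x y ω) hgrid).trans
    (add_le_add_right ?_ A)
  have : (n : ℝ) ^ (1 + 2 * α) ≤ (n : ℝ) ^ 3 := by
    rw [← rpow_natCast]; exact rpow_le_rpow_of_exponent_le hN (by push_cast; linarith)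
  calc 2 * L * (n : ℝ) ^ (1 + 2 * α) * ((n : ℝ) ^ 3)⁻¹
      ≤ 2 * L * (n : ℝ) ^ 3 * ((n : ℝ) ^ 3)⁻¹ := by gcongr
    _ = 2 * L := by field_simp

theorem ae_isBigO_iSup_abs_centeredKernelSum (hX : ∀ k, Measurable (X k))
    (hind : iIndepFun X μ) {Cg : ℝ} (hCg : 0 ≤ Cg)
    (hmap : ∀ k, μ.map (X k) ≤ ENNReal.ofReal Cg • volume) {L : NNReal}
    (hKL : LipschitzWith L K) {C : ℝ} (hKC : ∀ u, |K u| ≤ C)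
    (hK2 : Integrable fun u => K u ^ 2) (hα : 0 ≤ α) (hα1 : α ≤ 1)
    (hh : ∀ k : ℕ, h k = (k : ℝ) ^ (-α)) {β : ℝ} (hβ : (1 + α) / 2 < β) (hβ1 : β < 1) :
    ∀ᵐ ω ∂μ,
      (fun n : ℕ => ⨆ x ∈ Icc (-(1 / 2) : ℝ) (1 / 2), |centeredKernelSum μ X K h n x ω|)
        =O[atTop] fun n => (n : ℝ) ^ β := by
  filter_upwards [ae_eventually_abs_centeredKernelSum_grid_le hX hind hCg hmap
    hKL.continuous.measurable hKC hK2 hα hh hβ hβ1] with ω hω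
  refine isBigO_of_le_add_const (B := 2 * L)
    (fun n => Real.iSup_nonneg fun x => Real.iSup_nonneg fun _ => abs_nonneg _) ?_ ?_
  · filter_upwards [eventually_ge_atTop 1] with n hn
    exact one_le_rpow (Nat.one_le_cast.2 hn) (by linarith)
  · filter_upwards [hω, eventually_gt_atTop 0] with n hn hn0
    exact iSup_abs_centeredKernelSum_le_of_grid hX hKL hKC hα hα1 hh hn0 ω hn

end CenteredKernelSum

theorem stmt_8_general {Ω : Type*} [MeasureSpace Ω] [IsProbabilityMeasure (ℙ : Measure Ω)]
    (X : ℕ → Ω → ℝ) (g K : ℝ → ℝ) (α : ℝ)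
    (hα : 0 < α) (hα1 : α < 1)
    (hXm : ∀ k, Measurable (X k))
    (hindep : iIndepFun X ℙ)
    (hdens : ∀ k, Measure.map (X k) ℙ
        = MeasureTheory.volume.withDensity (fun x => ENNReal.ofReal (g x)))
    (hgbdd : ∃ C, ∀ x, g x ≤ C)
    (hKlip : ∃ L, LipschitzWith L K) (hKsupp : HasCompactSupport K)
    (h : ℕ → ℝ) (hh : ∀ k : ℕ, h k = (k : ℝ) ^ (-α))
    (M : ℕ → ℝ → Ω → ℝ)
    (hM : ∀ n x ω, M n x ω
        = ∑ k ∈ Finset.Icc 1 n,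
            ((h k)⁻¹ * K ((X k ω - x) / h k)
              - ∫ ω', (h k)⁻¹ * K ((X k ω' - x) / h k) ∂ℙ)) :
    ∀ᵐ ω ∂ℙ, ∀ β : ℝ, (1 + α) / 2 < β → β < 1 →
      (fun n : ℕ => ⨆ x ∈ Icc (-(1/2) : ℝ) (1/2), |M n x ω|)
        =o[atTop] (fun n : ℕ => (n : ℝ) ^ β) := by
  obtain rfl : M = centeredKernelSum ℙ X K h := funext fun n => funext fun x => funext (hM n x)
  obtain ⟨L, hKL⟩ := hKlip
  obtain ⟨C, hKC⟩ := hKsupp.exists_bound_of_continuous hKL.continuous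
  have hK2supp : HasCompactSupport fun u => K u ^ 2 :=
    hKsupp.comp_left (g := fun y : ℝ => y ^ 2) (by norm_num)
  have hK2 : Integrable fun u => K u ^ 2 :=
    (hKL.continuous.pow 2).integrable_of_hasCompactSupport hK2supp
  obtain ⟨Cg, hCg⟩ := hgbdd
  have hmap : ∀ k, (ℙ : Measure Ω).map (X k) ≤ ENNReal.ofReal (max Cg 0) • volume := by
    intro k
    rw [hdens k]
    exact withDensity_ofReal_le_smul volume fun x => (hCg x).trans (le_max_left Cg 0)
  have hrat : ∀ q : ℚ, ∀ᵐ ω ∂ℙ, (1 + α) / 2 < q → (q : ℝ) < 1 →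
      (fun n : ℕ => ⨆ x ∈ Icc (-(1 / 2) : ℝ) (1 / 2), |centeredKernelSum ℙ X K h n x ω|)
        =O[atTop] fun n => (n : ℝ) ^ (q : ℝ) := fun q => by
    by_cases hq : (1 + α) / 2 < q ∧ (q : ℝ) < 1
    · filter_upwards [ae_isBigO_iSup_abs_centeredKernelSum hXm hindep (le_max_right Cg 0) hmap
        hKL hKC hK2 hα.le hα1.le hh hq.1 hq.2] with ω hω using fun _ _ => hω
    · exact ae_of_all _ fun ω h1 h2 => absurd ⟨h1, h2⟩ hq
  filter_upwards [ae_all_iff.2 hrat] with ω hω β hβ hβ1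
  obtain ⟨q, hαq, hqβ⟩ := exists_rat_btwn hβ
  exact (hω q hαq (hqβ.trans hβ1)).trans_isLittleO (isLittleO_natCast_rpow_rpow hqβ)

/-- Let `(X_k)_{k≥1}` be i.i.d. random variables with values in `[−1/2, 1/2]` and bounded
density `g`, let `K` be a nonnegative, bounded, Lipschitz kernel with compact support and
`∫ K² = μ² < ∞`, and set `h_k = k^(−α)` for `0 < α < 1`.  Define
`M_n(x) = ∑_{k=1}^{n} [h_k⁻¹ K((X_k − x)/h_k) − E(h_k⁻¹ K((X_k − x)/h_k))]`.
Then almost surely, for every `β` with `(1+α)/2 < β < 1`,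
`sup_{|x| ≤ 1/2} |M_n(x)| = o(n^β)` as `n → ∞`. -/
theorem stmt_8 {Ω : Type*} [MeasureSpace Ω] [IsProbabilityMeasure (ℙ : Measure Ω)]
    (X : ℕ → Ω → ℝ) (g K : ℝ → ℝ) (α : ℝ)
    (hα : 0 < α) (hα1 : α < 1)
    (hXm : ∀ k, Measurable (X k))
    (hindep : iIndepFun X ℙ)
    (hident : ∀ i j, IdentDistrib (X i) (X j) ℙ ℙ)
    (hXrange : ∀ k ω, X k ω ∈ Icc (-(1/2) : ℝ) (1/2))
    (hdens : ∀ k, Measure.map (X k) ℙ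
        = MeasureTheory.volume.withDensity (fun x => ENNReal.ofReal (g x)))
    (hgbdd : ∃ C, ∀ x, g x ≤ C)
    (hKpos : ∀ u, 0 ≤ K u) (hKbdd : ∃ C, ∀ u, K u ≤ C)
    (hKlip : ∃ L, LipschitzWith L K) (hKsupp : HasCompactSupport K)
    (hKsq : Integrable (fun u => (K u) ^ 2))
    (h : ℕ → ℝ) (hh : ∀ k : ℕ, h k = (k : ℝ) ^ (-α))
    (M : ℕ → ℝ → Ω → ℝ)
    (hM : ∀ n x ω, M n x ω
        = ∑ k ∈ Finset.Icc 1 n,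
            ((h k)⁻¹ * K ((X k ω - x) / h k)
              - ∫ ω', (h k)⁻¹ * K ((X k ω' - x) / h k) ∂ℙ)) :
    ∀ᵐ ω ∂ℙ, ∀ β : ℝ, (1 + α) / 2 < β → β < 1 →
      (fun n : ℕ => ⨆ x ∈ Icc (-(1/2) : ℝ) (1/2), |M n x ω|)
        =o[atTop] (fun n : ℕ => (n : ℝ) ^ β) :=
  stmt_8_general X g K α hα hα1 hXm hindep hdens hgbdd hKlip hKsupp h hh M hM
end

section
/- For every real q < −1/2, lim_{n→∞} n^{1+2q} Σ_{k=1}^{n−2} ( Σ_{i=k+1}^{n−1} i^{−(2+q)} )² = 2/(q(1+2q)). -/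
/-!
Put `p = -(2 + q)` and `T k n = ∑_{k < i < n} i ^ p`. Going from `n` to `n + 1` adds `n ^ p` to
every tail, so `Q n = ∑_{1 ≤ k < n} (T k n)²` and `P n = ∑_{1 ≤ k < n} T k n` have increments
`Δ P n = (n - 1) n ^ p` and `Δ Q n = 2 n ^ p P n + (n - 1) n ^ (2p)`. A discrete Stolz–Cesàro
argument turns `Δ P n ~ n ^ (p + 1)` into `P n ~ n ^ (p + 2) / (p + 2)`, hence
`Δ Q n ~ 2 n ^ (2p + 2) / (p + 2)` and `Q n ~ 2 n ^ (2p + 3) / ((p + 2)(2p + 3))`.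
With `p + 2 = -q` and `2p + 3 = -(1 + 2q)`, both positive, this is the claim.
-/

open Filter Asymptotics Finset fwdDiff

/-- Stolz–Cesàro. -/
theorem Asymptotics.IsEquivalent.of_fwdDiff {u v : ℕ → ℝ} (h : Δ_[1] u ~[atTop] Δ_[1] v)
    (hv : Monotone v) (hv_top : Tendsto v atTop atTop) : u ~[atTop] v := by
  have hsum (w : ℕ → ℝ) (n : ℕ) : ∑ i ∈ range n, Δ_[1] w i = w n - w 0 := sum_range_sub w n
  have hv_sub : Tendsto (fun n ↦ v n - v 0) atTop atTop := tendsto_atTop_add_const_right _ _ hv_top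
  have hnorm {w : ℕ → ℝ} (hw : Tendsto w atTop atTop) : Tendsto (norm ∘ w) atTop atTop :=
    tendsto_norm_atTop_atTop.comp hw
  have hdiff : (fun n ↦ u n - u 0) ~[atTop] fun n ↦ v n - v 0 := by
    have := h.isLittleO.sum_range (fun n ↦ sub_nonneg.2 (hv n.le_succ))
      (by simpa only [hsum] using hv_sub)
    refine IsLittleO.isEquivalent ?_
    simpa only [Pi.sub_apply, sum_sub_distrib, hsum, Pi.sub_def] using this
  have hv_equiv : (fun n ↦ v n - v 0) ~[atTop] v := by
    simpa only [← sub_eq_add_neg] using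
      (IsEquivalent.refl (u := v)).add_const_of_norm_tendsto_atTop (c := -v 0) (hnorm hv_top)
  simpa using (hdiff.trans hv_equiv).add_const_of_norm_tendsto_atTop (c := u 0) (hnorm hv_top)

theorem isEquivalent_natCast_add_one_rpow_sub (t : ℝ) :
    (fun n : ℕ ↦ ((n : ℝ) + 1) ^ t - (n : ℝ) ^ t) ~[atTop] fun n ↦ t * (n : ℝ) ^ (t - 1) := by
  rcases eq_or_ne t 0 with rfl | ht
  · simp only [Real.rpow_zero, sub_self, zero_mul]; exact IsEquivalent.refl
  have hslope : Tendsto (fun n : ℕ ↦ (n : ℝ) * ((1 + (n : ℝ)⁻¹) ^ t - 1)) atTop (nhds t) := by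
    have hderiv := (Real.hasDerivAt_rpow_const (x := 1) (p := t) (Or.inl one_ne_zero))
    have := hderiv.tendsto_slope_zero_right.comp
      (tendsto_inv_atTop_nhdsGT_zero.comp tendsto_natCast_atTop_atTop)
    simpa [Function.comp_def] using this
  refine isEquivalent_of_tendsto_one ?_
  have hlim : Tendsto (fun n : ℕ ↦ (n : ℝ) * ((1 + (n : ℝ)⁻¹) ^ t - 1) / t) atTop (nhds 1) := by
    simpa [ht] using hslope.div_const t
  refine hlim.congr' ?_
  filter_upwards [eventually_gt_atTop 0] with n hn
  have hn : (0 : ℝ) < n := by exact_mod_cast hn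
  have hsplit : (n : ℝ) + 1 = n * (1 + (n : ℝ)⁻¹) := by field_simp
  rw [Pi.div_apply, hsplit, Real.mul_rpow hn.le (by positivity), Real.rpow_sub_one hn.ne']
  field_simp

theorem isLittleO_natCast_rpow_rpow_s14 {a b : ℝ} (hab : a < b) :
    (fun n : ℕ ↦ (n : ℝ) ^ a) =o[atTop] fun n ↦ (n : ℝ) ^ b := by
  have hpos : ∀ᶠ n : ℕ in atTop, (0 : ℝ) < n := by
    filter_upwards [eventually_gt_atTop 0] with n hn using by exact_mod_cast hn
  refine (isLittleO_iff_tendsto' (hpos.mono fun n hn h ↦ ?_)).2 ?_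
  · exact absurd h (Real.rpow_pos_of_pos hn b).ne'
  refine ((tendsto_rpow_neg_atTop (sub_pos.2 hab)).comp tendsto_natCast_atTop_atTop).congr' ?_
  filter_upwards [hpos] with n hn
  rw [Function.comp_apply, neg_sub, Real.rpow_sub hn]

theorem Asymptotics.IsEquivalent.of_fwdDiff_rpow {u : ℕ → ℝ} {a c : ℝ} (ha : 0 < a) (hc : 0 < c)
    (h : Δ_[1] u ~[atTop] fun n ↦ c * (n : ℝ) ^ (a - 1)) :
    u ~[atTop] fun n ↦ c / a * (n : ℝ) ^ a := by
  refine IsEquivalent.of_fwdDiff (h.trans ?_) (fun m n hmn ↦ ?_) ?_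
  · have hdiff := (IsEquivalent.refl (u := fun _ : ℕ ↦ c / a)).mul
      (isEquivalent_natCast_add_one_rpow_sub a)
    refine ((hdiff.congr_left ?_).congr_right ?_).symm
    · exact Eventually.of_forall fun n ↦ by simp [fwdDiff, mul_sub]
    · exact Eventually.of_forall fun n ↦ by simp only [Pi.mul_apply]; field_simp
  · gcongr
  · exact ((tendsto_rpow_atTop ha).comp tendsto_natCast_atTop_atTop).const_mul_atTop (by positivity)

theorem fwdDiff_sum_Ico_tail (F : ℝ → ℝ) (hF : F 0 = 0) (f : ℕ → ℝ) (n : ℕ) :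
    Δ_[1] (fun n ↦ ∑ k ∈ Ico 1 n, F (∑ i ∈ Ico (k + 1) n, f i)) n =
      ∑ k ∈ Ico 1 n, (F (∑ i ∈ Ico (k + 1) n, f i + f n) - F (∑ i ∈ Ico (k + 1) n, f i)) := by
  rcases n.eq_zero_or_pos with rfl | hn
  · simp [fwdDiff]
  rw [fwdDiff, sum_Ico_succ_top hn, Ico_self, sum_empty, hF, add_zero, ← sum_sub_distrib]
  refine sum_congr rfl fun k hk ↦ ?_
  rw [sum_Ico_succ_top (Nat.succ_le_of_lt (mem_Ico.1 hk).2)]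

theorem sum_sq_Icc_tail_eq_sum_sq_Ico_tail (f : ℕ → ℝ) (n : ℕ) :
    ∑ k ∈ Icc 1 (n - 2), (∑ i ∈ Icc (k + 1) (n - 1), f i) ^ 2 =
      ∑ k ∈ Ico 1 n, (∑ i ∈ Ico (k + 1) n, f i) ^ 2 := by
  rcases n with _ | _ | m
  · simp
  · simp
  rw [sum_Ico_succ_top (by omega), Ico_self, sum_empty, zero_pow two_ne_zero, add_zero,
    ← Ico_add_one_right_eq_Icc]
  refine sum_congr rfl fun k _ ↦ ?_
  rw [← Ico_add_one_right_eq_Icc]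
  rfl

theorem isEquivalent_sum_tail_rpow {p : ℝ} (hp : -2 < p) :
    (fun n : ℕ ↦ ∑ k ∈ Ico 1 n, ∑ i ∈ Ico (k + 1) n, (i : ℝ) ^ p) ~[atTop]
      fun n ↦ 1 / (p + 2) * (n : ℝ) ^ (p + 2) := by
  refine IsEquivalent.of_fwdDiff_rpow (by linarith) one_pos ?_
  have hdiff : Δ_[1] (fun n : ℕ ↦ ∑ k ∈ Ico 1 n, ∑ i ∈ Ico (k + 1) n, (i : ℝ) ^ p) =ᶠ[atTop]
      fun n ↦ (n : ℝ) ^ (p + 1) - (n : ℝ) ^ p := by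
    filter_upwards [eventually_gt_atTop 0] with n hn
    have := fwdDiff_sum_Ico_tail (fun x ↦ x) rfl (fun i : ℕ ↦ (i : ℝ) ^ p) n
    simp only [add_sub_cancel_left, sum_const, Nat.card_Ico, nsmul_eq_mul] at this
    rw [this, Nat.cast_sub hn, Real.rpow_add_one (by positivity)]
    push_cast
    ring
  refine (IsEquivalent.refl.sub_isLittleO (isLittleO_natCast_rpow_rpow_s14 (lt_add_one p))).congr_left
    hdiff.symm |>.congr_right ?_
  exact Eventually.of_forall fun n ↦ by ring_nf

theorem isEquivalent_sum_sq_tail_rpow {p : ℝ} (hp : -3 / 2 < p) :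
    (fun n : ℕ ↦ ∑ k ∈ Ico 1 n, (∑ i ∈ Ico (k + 1) n, (i : ℝ) ^ p) ^ 2) ~[atTop]
      fun n ↦ 2 / (p + 2) / (2 * p + 3) * (n : ℝ) ^ (2 * p + 3) := by
  have hp2 : 0 < p + 2 := by linarith
  refine IsEquivalent.of_fwdDiff_rpow (by linarith) (by positivity) ?_
  have hdiff : Δ_[1] (fun n : ℕ ↦ ∑ k ∈ Ico 1 n, (∑ i ∈ Ico (k + 1) n, (i : ℝ) ^ p) ^ 2) =ᶠ[atTop]
      fun n ↦ 2 * (n : ℝ) ^ p * (∑ k ∈ Ico 1 n, ∑ i ∈ Ico (k + 1) n, (i : ℝ) ^ p) +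
        ((n : ℝ) ^ (2 * p + 1) - (n : ℝ) ^ (2 * p)) := by
    filter_upwards [eventually_gt_atTop 0] with n hn
    have := fwdDiff_sum_Ico_tail (· ^ 2) (by norm_num) (fun i : ℕ ↦ (i : ℝ) ^ p) n
    have hsq (T x : ℝ) : (T + x) ^ 2 - T ^ 2 = 2 * x * T + x ^ 2 := by ring
    simp only [hsq, sum_add_distrib, ← mul_sum, sum_const, Nat.card_Ico, nsmul_eq_mul] at this
    have hpow : ((n : ℝ) ^ p) ^ 2 = (n : ℝ) ^ (2 * p) := by
      rw [← Real.rpow_two, ← Real.rpow_mul (Nat.cast_nonneg n), mul_comm]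
    rw [this, Nat.cast_sub hn, Real.rpow_add_one (by positivity), hpow]
    push_cast
    ring
  have hmain : (fun n : ℕ ↦ 2 * (n : ℝ) ^ p * (∑ k ∈ Ico 1 n, ∑ i ∈ Ico (k + 1) n, (i : ℝ) ^ p))
      ~[atTop] fun n ↦ 2 / (p + 2) * (n : ℝ) ^ (2 * p + 3 - 1) := by
    refine ((IsEquivalent.refl (u := fun n : ℕ ↦ 2 * (n : ℝ) ^ p)).mul
      (isEquivalent_sum_tail_rpow (by linarith))).congr_right ?_
    filter_upwards [eventually_gt_atTop 0] with n hn
    rw [Pi.mul_apply, show 2 * p + 3 - 1 = p + (p + 2) by ring,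
      Real.rpow_add (by exact_mod_cast hn) p (p + 2)]
    ring
  have hsmall : (fun n : ℕ ↦ (n : ℝ) ^ (2 * p + 1) - (n : ℝ) ^ (2 * p)) =o[atTop]
      fun n ↦ 2 / (p + 2) * (n : ℝ) ^ (2 * p + 3 - 1) := by
    refine IsLittleO.const_mul_right (by positivity) ?_
    exact (isLittleO_natCast_rpow_rpow_s14 (by linarith)).sub
      (isLittleO_natCast_rpow_rpow_s14 (by linarith))
  exact (hmain.add_isLittleO hsmall).congr_left hdiff.symm

/-- For every real `q < -1/2`,
`lim_{n→∞} n^(1+2q) * ∑_{k=1}^{n-2} (∑_{i=k+1}^{n-1} i^(-(2+q)))² = 2/(q(1+2q))`,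
where the powers are real powers. -/
theorem stmt_14 (q : ℝ) (hq : q < -(1/2)) :
    Tendsto
      (fun n : ℕ =>
        (n : ℝ) ^ (1 + 2*q) *
          ∑ k ∈ Finset.Icc 1 (n - 2),
            (∑ i ∈ Finset.Icc (k + 1) (n - 1), (i : ℝ) ^ (-(2 + q))) ^ 2)
      atTop (nhds (2 / (q * (1 + 2*q)))) := by
  have hQ := (IsEquivalent.refl (u := fun n : ℕ ↦ (n : ℝ) ^ (1 + 2 * q))).mul
    (isEquivalent_sum_sq_tail_rpow (p := -(2 + q)) (by linarith))
  simp only [sum_sq_Icc_tail_eq_sum_sq_Ico_tail]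
  refine hQ.symm.tendsto_nhds (tendsto_const_nhds.congr' ?_)
  filter_upwards [eventually_gt_atTop 0] with n hn
  have hq0 : q ≠ 0 := by linarith
  have hq1 : 1 + 2 * q ≠ 0 := by linarith
  rw [Pi.mul_apply, show -(2 + q) + 2 = -q by ring, show 2 * -(2 + q) + 3 = -(1 + 2 * q) by ring,
    mul_left_comm, ← Real.rpow_add (by positivity), show 1 + 2 * q + -(1 + 2 * q) = 0 by ring,
    Real.rpow_zero]
  field_simp
end

section
/- For every real q < −1/2 there exists δ > 0 such that n^{3/2+3q} ( Σ_{k=1}^{n−2} k^{−(1+q)(2+δ)} + Σ_{k=1}^{n−2} ( Σ_{i=k+1}^{n−1} i^{−(2+q)} )^{2+δ} ) → 0 as n → ∞. -/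
/-!
Take `δ = 1/8`. Both sums are compared with telescoping sums through Bernoulli's inequality,
giving `∑_{k ≤ N} k ^ (p - 1) ≤ N ^ p / p` for `0 < p ≤ 1` and
`∑_{k < i ≤ m} i ^ (-b) ≤ k ^ (1 - b) / (b - 1)` for `b > 1`. If `q > -1` the inner sums are tails of a convergent series, hence `O(k ^ (-(1 + q)))`,
so the second sum is at most a constant times the first, and the first is `O(n ^ (-1 - 2q))`.
If `q ≤ -1` each sum is bounded crudely by a power of `n`; for `δ = 1/8` the total exponent
is still negative.
-/

open Filter Real Finset Asymptotics Topology

lemma sum_Icc_succ_le_sub_of_le {f g : ℕ → ℝ} {k m : ℕ} (hkm : k ≤ m)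
    (h : ∀ i, k ≤ i → i < m → f (i + 1) ≤ g (i + 1) - g i) :
    ∑ i ∈ Icc (k + 1) m, f i ≤ g m - g k := by
  induction m, hkm using Nat.le_induction with
  | base => simp
  | succ m hkm ih =>
    rw [sum_Icc_succ_top (by omega)]
    linarith [ih fun i hi him => h i hi (by omega), h m hkm (by omega)]

lemma mul_rpow_sub_one_le_rpow_sub {p x : ℝ} (hp₀ : 0 ≤ p) (hp₁ : p ≤ 1) (hx : 1 ≤ x) :
    p * x ^ (p - 1) ≤ x ^ p - (x - 1) ^ p := by
  have hx₀ : 0 < x := by linarith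
  have hbern := rpow_one_add_le_one_add_mul_self (s := -x⁻¹)
    (by linarith [inv_le_one_of_one_le₀ hx]) hp₀ hp₁
  have hsplit : (x - 1) ^ p = x ^ p * (1 + -x⁻¹) ^ p := by
    rw [← mul_rpow hx₀.le (by linarith [inv_le_one_of_one_le₀ hx])]
    field_simp
    ring_nf
  have hpow : x ^ (p - 1) = x ^ p * x⁻¹ := by rw [rpow_sub_one hx₀.ne', div_eq_mul_inv]
  have : (x - 1) ^ p ≤ x ^ p - p * x ^ (p - 1) :=
    calc (x - 1) ^ p = x ^ p * (1 + -x⁻¹) ^ p := hsplit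
      _ ≤ x ^ p * (1 + p * -x⁻¹) := by gcongr
      _ = x ^ p - p * x ^ (p - 1) := by rw [hpow]; ring
  linarith

lemma mul_rpow_neg_le_rpow_sub {b x : ℝ} (hb : 1 ≤ b) (hx : 1 < x) :
    (b - 1) * x ^ (-b) ≤ (x - 1) ^ (1 - b) - x ^ (1 - b) := by
  have hx₀ : 0 < x := by linarith
  have hy : 0 < x - 1 := by linarith
  have hbern := one_add_mul_self_le_rpow_one_add (s := (x - 1)⁻¹)
    (by linarith [inv_pos.2 hy]) hb
  rw [show 1 + (x - 1)⁻¹ = x * (x - 1)⁻¹ by field_simp; ring,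
    mul_rpow hx₀.le (inv_nonneg.2 hy.le), inv_rpow hy.le] at hbern
  set A := x ^ b
  set B := (x - 1) ^ b
  have hA : 0 < A := rpow_pos_of_pos hx₀ b
  have hB : 0 < B := rpow_pos_of_pos hy b
  have key : (x - 1 + b) * B ≤ (x - 1) * A :=
    calc (x - 1 + b) * B = (x - 1) * B * (1 + b * (x - 1)⁻¹) := by field_simp
      _ ≤ (x - 1) * B * (A * B⁻¹) := by gcongr
      _ = (x - 1) * A := by field_simp
  rw [rpow_neg hx₀.le, rpow_sub hy, rpow_sub hx₀, rpow_one, rpow_one, le_sub_iff_add_le,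
    show (b - 1) * A⁻¹ + x / A = (x - 1 + b) / A by field_simp; ring]
  exact (div_le_div_iff₀ hA hB).2 key

lemma sum_Icc_rpow_sub_one_le {p : ℝ} (hp₀ : 0 < p) (hp₁ : p ≤ 1) (N : ℕ) :
    ∑ k ∈ Icc 1 N, (k : ℝ) ^ (p - 1) ≤ N ^ p / p := by
  have := sum_Icc_succ_le_sub_of_le (Nat.zero_le N) (f := fun k => (k : ℝ) ^ (p - 1))
    (g := fun k => (k : ℝ) ^ p / p) fun i _ _ => by
      have := mul_rpow_sub_one_le_rpow_sub hp₀.le hp₁ (x := i + 1)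
        (by linarith [Nat.cast_nonneg (α := ℝ) i])
      push_cast
      rw [← sub_div, le_div_iff₀ hp₀]
      simpa [mul_comm] using this
  simpa [zero_rpow hp₀.ne'] using this

lemma sum_Icc_rpow_le_s16 {p e : ℝ} {N n : ℕ} (hp : 0 < p) (he : e ≤ p - 1) (hN : N ≤ n) :
    ∑ k ∈ Icc 1 N, (k : ℝ) ^ e ≤ (min p 1)⁻¹ * n ^ p := by
  calc ∑ k ∈ Icc 1 N, (k : ℝ) ^ e ≤ ∑ k ∈ Icc 1 N, (k : ℝ) ^ (p - 1) :=
        sum_le_sum fun k hk =>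
          rpow_le_rpow_of_exponent_le (Nat.one_le_cast.2 (mem_Icc.1 hk).1) he
    _ ≤ (min p 1)⁻¹ * n ^ p := by
      rcases le_total p 1 with hp₁ | hp₁
      · rw [min_eq_left hp₁, inv_mul_eq_div]
        calc _ ≤ (N : ℝ) ^ p / p := sum_Icc_rpow_sub_one_le hp hp₁ N
          _ ≤ (n : ℝ) ^ p / p := by gcongr
      · rw [min_eq_right hp₁, inv_one, one_mul]
        calc _ ≤ ∑ _k ∈ Icc 1 N, (n : ℝ) ^ (p - 1) := sum_le_sum fun k hk =>
              rpow_le_rpow k.cast_nonneg (Nat.cast_le.2 ((mem_Icc.1 hk).2.trans hN)) (by linarith)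
          _ = N * (n : ℝ) ^ (p - 1) := by simp
          _ ≤ n * (n : ℝ) ^ (p - 1) := by gcongr
          _ = n ^ p := by rw [← rpow_one_add' n.cast_nonneg (by linarith), add_sub_cancel]

lemma sum_Icc_succ_rpow_neg_le {b : ℝ} {k : ℕ} (hb : 1 < b) (hk : 1 ≤ k) (m : ℕ) :
    ∑ i ∈ Icc (k + 1) m, (i : ℝ) ^ (-b) ≤ k ^ (1 - b) / (b - 1) := by
  rcases le_or_gt k m with hkm | hmk
  · have := sum_Icc_succ_le_sub_of_le hkm (f := fun i => (i : ℝ) ^ (-b))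
      (g := fun i => -(i : ℝ) ^ (1 - b) / (b - 1)) fun i hi _ => by
        have := mul_rpow_neg_le_rpow_sub hb.le (x := i + 1)
          (by linarith [(Nat.one_le_cast (α := ℝ)).2 (hk.trans hi)])
        push_cast
        rw [div_sub_div_same, neg_sub_neg, le_div_iff₀ (by linarith)]
        simpa [mul_comm] using this
    calc _ ≤ -(m : ℝ) ^ (1 - b) / (b - 1) - -(k : ℝ) ^ (1 - b) / (b - 1) := this
      _ ≤ k ^ (1 - b) / (b - 1) := by
        rw [div_sub_div_same, neg_sub_neg]
        gcongr
        linarith [rpow_nonneg m.cast_nonneg (1 - b)]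
  · rw [Icc_eq_empty (by omega), sum_empty]
    exact div_nonneg (rpow_nonneg k.cast_nonneg _) (by linarith)

lemma sum_tail_rpow_le_of_one_lt {b r : ℝ} (hb : 1 < b) (hr : 0 ≤ r) (N m : ℕ) :
    ∑ k ∈ Icc 1 N, (∑ i ∈ Icc (k + 1) m, (i : ℝ) ^ (-b)) ^ r ≤
      ((b - 1) ^ r)⁻¹ * ∑ k ∈ Icc 1 N, (k : ℝ) ^ ((1 - b) * r) := by
  rw [mul_sum]
  refine sum_le_sum fun k hk => ?_
  calc _ ≤ ((k : ℝ) ^ (1 - b) / (b - 1)) ^ r :=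
        rpow_le_rpow (by positivity) (sum_Icc_succ_rpow_neg_le hb (mem_Icc.1 hk).1 m) hr
    _ = _ := by
      rw [div_rpow (by positivity) (by linarith), ← rpow_mul k.cast_nonneg, div_eq_inv_mul]

lemma sum_tail_rpow_le {b p r : ℝ} {N m n : ℕ} (hp : 0 < p) (hbp : -b ≤ p - 1) (hr : 0 ≤ r)
    (hN : N ≤ n) (hm : m ≤ n) :
    ∑ k ∈ Icc 1 N, (∑ i ∈ Icc (k + 1) m, (i : ℝ) ^ (-b)) ^ r ≤
      ((min p 1) ^ r)⁻¹ * n ^ (1 + p * r) := by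
  have hinner : ∀ k, ∑ i ∈ Icc (k + 1) m, (i : ℝ) ^ (-b) ≤ (min p 1)⁻¹ * n ^ p := fun k =>
    calc _ ≤ ∑ i ∈ Icc 1 m, (i : ℝ) ^ (-b) :=
          sum_le_sum_of_subset_of_nonneg (Icc_subset_Icc (by omega) le_rfl)
            fun i _ _ => by positivity
      _ ≤ _ := sum_Icc_rpow_le_s16 hp hbp hm
  calc _ ≤ ∑ _k ∈ Icc 1 N, ((min p 1)⁻¹ * (n : ℝ) ^ p) ^ r :=
        sum_le_sum fun k _ => rpow_le_rpow (by positivity) (hinner k) hr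
    _ = N * ((min p 1)⁻¹ * (n : ℝ) ^ p) ^ r := by simp
    _ ≤ n * ((min p 1)⁻¹ * (n : ℝ) ^ p) ^ r := by gcongr
    _ = _ := by
      rw [mul_rpow (by positivity) (by positivity), inv_rpow (by positivity),
        ← rpow_mul n.cast_nonneg, rpow_one_add' n.cast_nonneg (by positivity)]
      ring

lemma isBigO_rpow_of_le {f : ℕ → ℝ} {C p : ℝ} (hf₀ : ∀ n, 0 ≤ f n)
    (hf : ∀ n, f n ≤ C * (n : ℝ) ^ p) : f =O[atTop] fun n => (n : ℝ) ^ p :=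
  IsBigO.of_bound C <| Eventually.of_forall fun n => by
    rw [norm_of_nonneg (hf₀ n), norm_of_nonneg (by positivity)]
    exact hf n

lemma tendsto_rpow_mul_of_isBigO {f : ℕ → ℝ} {α p : ℝ} (hf : f =O[atTop] fun n => (n : ℝ) ^ p)
    (hαp : α + p < 0) : Tendsto (fun n : ℕ => (n : ℝ) ^ α * f n) atTop (𝓝 0) := by
  have hO : (fun n : ℕ => (n : ℝ) ^ α * f n) =O[atTop] fun n : ℕ => (n : ℝ) ^ (α + p) := by
    refine ((isBigO_refl (fun n : ℕ => (n : ℝ) ^ α) atTop).mul hf).congr' EventuallyEq.rfl ?_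
    filter_upwards [eventually_gt_atTop 0] with n hn
    rw [rpow_add (Nat.cast_pos.2 hn)]
  refine hO.trans_tendsto ?_
  simpa [Function.comp_def] using
    (tendsto_rpow_neg_atTop (neg_pos.2 hαp)).comp tendsto_natCast_atTop_atTop

/-- For every real `q < -1/2` there exists `δ > 0` such that
`n^(3/2+3q) * (∑_{k=1}^{n-2} k^(-(1+q)(2+δ)) + ∑_{k=1}^{n-2} (∑_{i=k+1}^{n-1} i^(-(2+q)))^(2+δ))`
tends to `0` as `n → ∞`, where all powers are real powers. -/
theorem stmt_16 (q : ℝ) (hq : q < -(1/2)) :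
    ∃ δ : ℝ, 0 < δ ∧
      Tendsto
        (fun n : ℕ =>
          (n : ℝ) ^ (3/2 + 3*q) *
            ((∑ k ∈ Finset.Icc 1 (n - 2), (k : ℝ) ^ (-((1 + q) * (2 + δ)))) +
              ∑ k ∈ Finset.Icc 1 (n - 2),
                (∑ i ∈ Finset.Icc (k + 1) (n - 1), (i : ℝ) ^ (-(2 + q))) ^ (2 + δ)))
        atTop (nhds 0) := by
  refine ⟨1/8, by norm_num, ?_⟩
  have hS₁ {p : ℝ} (hp : 0 < p) (he : -((1 + q) * (2 + 1/8)) ≤ p - 1) (n : ℕ) :=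
    sum_Icc_rpow_le_s16 hp he (Nat.sub_le n 2)
  rcases lt_or_ge (-1) q with hq₁ | hq₁
  · have hS₂ (n : ℕ) := by
      have := sum_tail_rpow_le_of_one_lt (b := 2 + q) (r := 2 + 1/8) (by linarith) (by norm_num)
        (n - 2) (n - 1)
      rw [show 2 + q - 1 = 1 + q by ring,
        show (1 - (2 + q)) * (2 + 1/8) = -((1 + q) * (2 + 1/8)) by ring] at this
      exact this.trans (mul_le_mul_of_nonneg_left (hS₁ (p := -1 - 2 * q) (by linarith)
        (by linarith) n) (inv_nonneg.2 (rpow_nonneg (by linarith) _)))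
    exact tendsto_rpow_mul_of_isBigO
      ((isBigO_rpow_of_le (fun n => by positivity) (hS₁ (by linarith) (by linarith))).add
        (isBigO_rpow_of_le (fun n => by positivity)
          fun n => (hS₂ n).trans_eq (mul_assoc _ _ _).symm)) (by linarith)
  · have hS₂ (n : ℕ) := sum_tail_rpow_le (b := 2 + q) (p := -7/8 - q) (r := 2 + 1/8)
      (N := n - 2) (by linarith) (by linarith) (by norm_num) (Nat.sub_le n 2) (Nat.sub_le n 1)
    exact tendsto_rpow_mul_of_isBigO
      ((isBigO_rpow_of_le (fun n => by positivity) (hS₁ (by linarith) (by linarith))).add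
        (isBigO_rpow_of_le (fun n => by positivity) hS₂)) (by linarith)
end
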